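/- A Czech hat game on the complete loopless digraph on Fin n (arcs between every ordered pair of distinct vertices, so each sage sees every other sage's hat) with guessness g and hatness h is winnable if and only if ∑ i, (g i : ℚ) / (h i) ≥ 1. -/

import Mathlib

/-! Necessity is double counting: a sage does not see her own hat, so for each view of the others
exactly `g v` of her `h v` possible colors are guessed, i.e. she is right on the fraction
`g v / h v` of all colorings, and these fractions must cover every coloring.

Sufficiency: with `L = ∏ h u` and `m v = L / h v`, encode a coloring `c` as the point
`∑ c u * m u` of `ℤ/L`. Arcs of lengths `g v * m v` laid end to end cover `ℤ/L` since
`∑ g v * m v ≥ L`. Sage `v` knows the point up to a multiple of `m v`, i.e. up to one of `h v`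
equally spaced positions, of which her arc contains exactly `g v`; she guesses those. -/

/-- A Czech hat game on the digraph with adjacency `D` (sage `v` sees sage `u`
iff `D v u`), guessness `g`, and hatness `h`, is winnable: there is a strategy
assigning to each sage `v` a set of `g v` guesses, depending only on the hats
she sees, such that for every coloring some sage guesses her own hat color. -/
def HatGame.Winnable {V : Type*} (D : V → V → Prop) (g h : V → ℕ) : Prop :=
  ∃ F : ∀ v : V, (∀ u : V, Fin (h u)) → Finset (Fin (h v)),
    (∀ (v : V) (c c' : ∀ u : V, Fin (h u)),
        (∀ u : V, D v u → c u = c' u) → F v c = F v c') ∧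
    (∀ (v : V) (c : ∀ u : V, Fin (h u)), (F v c).card = g v) ∧
    (∀ c : ∀ u : V, Fin (h u), ∃ v : V, c v ∈ F v c)

open Finset

theorem card_filter_mem_mul_card {V : Type*} [Fintype V] [DecidableEq V] {β : V → Type*}
    [∀ v, Fintype (β v)] [∀ v, DecidableEq (β v)] (v : V) (S : (∀ u, β u) → Finset (β v))
    (hS : ∀ c x, S (Function.update c v x) = S c) {k : ℕ} (hk : ∀ c, #(S c) = k) :
    #{c | c v ∈ S c} * Fintype.card (β v) = k * Fintype.card (∀ u, β u) := by
  let P : Finset ((∀ u, β u) × β v) := {p | p.2 ∈ S p.1}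
  have hP : #P = k * Fintype.card (∀ u, β u) := by
    rw [card_filter, Fintype.sum_prod_type]
    simp only [sum_boole]
    simp [hk, mul_comm]
  -- `(c, x) ↦ (c with hat x at v, c v)` is an involution exchanging `P` with the right-hand set.
  have hswap : #P = #(({c | c v ∈ S c} : Finset (∀ u, β u)) ×ˢ (univ : Finset (β v))) := by
    refine card_nbij' (fun p => (Function.update p.1 v p.2, p.1 v))
      (fun p => (Function.update p.1 v p.2, p.1 v)) ?_ ?_ ?_ ?_ <;> intro p <;> simp [P, hS]
  rw [← card_univ, ← card_product, ← hswap, hP]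

theorem card_filter_add_mod_lt {h g : ℕ} (hg : g ≤ h) (q : ℕ) :
    #{x : Fin h | (q + x) % h < g} = g := by
  rcases Nat.eq_zero_or_pos h with rfl | hh
  · simp [Nat.le_zero.mp hg]
  have : NeZero h := ⟨hh.ne'⟩
  calc #{x : Fin h | (q + x) % h < g}
      = #{y : Fin h | y < g} :=
        card_equiv (Equiv.addLeft (Fin.ofNat h q)) fun x => by simp [Fin.val_add]
    _ = g := by rw [Fin.card_filter_val_lt, min_eq_right hg]

theorem card_filter_add_mul_mod_lt {h g m : ℕ} (hm : 0 < m) (hg : g ≤ h) (C : ℕ) :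
    #{x : Fin h | (C + x * m) % (h * m) < g * m} = g := by
  have hiff : ∀ x : Fin h, (C + x * m) % (h * m) < g * m ↔ (C / m + x) % h < g := fun x => by
    rw [mul_comm h m, ← Nat.div_lt_iff_lt_mul hm, Nat.mod_mul_right_div_self,
      Nat.add_mul_div_right _ _ hm]
  simp only [hiff]
  exact card_filter_add_mod_lt hg _

theorem exists_intervals_cover_lt_sum {V : Type*} [DecidableEq V] (ℓ : V → ℕ) (s : Finset V) :
    ∃ a : V → ℕ, ∀ T < ∑ v ∈ s, ℓ v, ∃ v ∈ s, a v ≤ T ∧ T < a v + ℓ v := by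
  induction s using Finset.induction_on with
  | empty => exact ⟨0, by simp⟩
  | @insert w s hw ih =>
    obtain ⟨a, ha⟩ := ih
    refine ⟨Function.update a w (∑ v ∈ s, ℓ v), fun T hT => ?_⟩
    rw [sum_insert hw] at hT
    by_cases hTs : T < ∑ v ∈ s, ℓ v
    · obtain ⟨v, hv, hav⟩ := ha T hTs
      have hvw : v ≠ w := ne_of_mem_of_not_mem hv hw
      exact ⟨v, mem_insert_of_mem hv, by simpa [hvw] using hav⟩
    · exact ⟨w, mem_insert_self w s, by simp; omega⟩

namespace HatGame

theorem Winnable.one_le_sum {V : Type*} [Fintype V] [DecidableEq V] {D : V → V → Prop}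
    {g h : V → ℕ} (hD : ∀ v, ¬ D v v) (hh : ∀ v, 0 < h v) (hW : Winnable D g h) :
    1 ≤ ∑ v, (g v : ℚ) / h v := by
  obtain ⟨F, hvis, hcard, hwin⟩ := hW
  set N := Fintype.card (∀ u, Fin (h u))
  have hN : 0 < N := Fintype.card_pos_iff.2 ⟨fun u => ⟨0, hh u⟩⟩
  have hright : ∀ v, (#{c | c v ∈ F v c} : ℚ) = N * (g v / h v) := fun v => by
    have := card_filter_mem_mul_card v (F v)
      (fun c x => hvis v _ _ fun u hu => Function.update_of_ne (by rintro rfl; exact hD u hu) _ _)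
      (hcard v)
    rw [Fintype.card_fin] at this
    rw [mul_div_assoc', eq_div_iff (by exact_mod_cast (hh v).ne'), mul_comm (N : ℚ)]
    exact_mod_cast this
  have hcover : N ≤ ∑ v, #{c | c v ∈ F v c} :=
    calc N = #(univ : Finset (∀ u, Fin (h u))) := card_univ.symm
      _ ≤ #(univ.biUnion fun v => ({c | c v ∈ F v c} : Finset _)) :=
        card_le_card fun c _ => by simpa using hwin c
      _ ≤ _ := card_biUnion_le
  have : (N : ℚ) * 1 ≤ N * ∑ v, (g v : ℚ) / h v := by
    rw [mul_sum, mul_one, ← sum_congr rfl fun v _ => hright v]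
    exact_mod_cast hcover
  exact le_of_mul_le_mul_left this (by exact_mod_cast hN)

theorem winnable_ne_of_intervals_cover {V : Type*} [Fintype V] [DecidableEq V]
    {g h m a : V → ℕ} {L : ℕ} (hg : ∀ v, g v ≤ h v) (hL : 0 < L) (hmL : ∀ v, h v * m v = L)
    (hcover : ∀ T < L, ∃ v, a v ≤ T ∧ T < a v + g v * m v) :
    Winnable (· ≠ ·) g h := by
  -- `L - a v` stands for `-a v` in `ℤ/L`; this is exact for the sages with `a v ≤ T < L`.
  let seen (v : V) (c : ∀ u, Fin (h u)) : ℕ := ∑ u ∈ univ.erase v, c u * m u + (L - a v)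
  refine ⟨fun v c => {x | (seen v c + x * m v) % L < g v * m v}, ?_, ?_, ?_⟩
  · intro v c c' hcc'
    have : seen v c = seen v c' :=
      congrArg (· + _) (sum_congr rfl fun u hu => by rw [hcc' u (ne_of_mem_erase hu).symm])
    simp only [this]
  · intro v c
    have hm : 0 < m v := Nat.pos_of_mul_pos_left ((hmL v).symm ▸ hL)
    rw [← hmL v]
    exact card_filter_add_mul_mod_lt hm (hg v) _
  · intro c
    set T := (∑ u, c u * m u) % L
    have hT : T < L := Nat.mod_lt _ hL
    obtain ⟨v, hav, hva⟩ := hcover T hT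
    refine ⟨v, mem_filter.2 ⟨mem_univ _, ?_⟩⟩
    have hsplit : seen v c + c v * m v = ∑ u, c u * m u + (L - a v) := by
      rw [← add_sum_erase _ _ (mem_univ v)]; ring
    rw [hsplit, ← Nat.mod_add_mod, show T + (L - a v) = T - a v + L by omega,
      Nat.add_mod_right, Nat.mod_eq_of_lt (by omega)]
    omega

theorem winnable_ne_of_one_le_sum {V : Type*} [Fintype V] [DecidableEq V] {g h : V → ℕ}
    (hg : ∀ v, g v ≤ h v) (hh : ∀ v, 0 < h v) (hsum : 1 ≤ ∑ v, (g v : ℚ) / h v) :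
    Winnable (· ≠ ·) g h := by
  set L := ∏ v, h v
  set m : V → ℕ := fun v => ∏ u ∈ univ.erase v, h u
  have hmL : ∀ v, h v * m v = L := fun v => mul_prod_erase _ _ (mem_univ v)
  have hL : 0 < L := prod_pos fun v _ => hh v
  have hlen : L ≤ ∑ v, g v * m v := by
    have hfrac : ∀ v, (g v : ℚ) / h v = (g v * m v : ℕ) / L := fun v => by
      have hm : (m v : ℚ) ≠ 0 := by
        exact_mod_cast (Nat.pos_of_mul_pos_left ((hmL v).symm ▸ hL)).ne'
      rw [← hmL v]; push_cast; rw [mul_div_mul_right _ _ hm]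
    rw [sum_congr rfl fun v _ => hfrac v, ← sum_div, le_div_iff₀ (by exact_mod_cast hL),
      one_mul] at hsum
    exact_mod_cast hsum
  obtain ⟨a, ha⟩ := exists_intervals_cover_lt_sum (fun v => g v * m v) univ
  exact winnable_ne_of_intervals_cover hg hL hmL fun T hT =>
    (ha T (hT.trans_le hlen)).imp fun _ ⟨_, hv⟩ => hv

end HatGame

theorem czech_complete_winnable_iff (n : ℕ) (g h : Fin n → ℕ)
    (hgh : ∀ i, 0 < g i ∧ g i < h i) :
    HatGame.Winnable (fun v u : Fin n => v ≠ u) g h ↔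
      1 ≤ ∑ i : Fin n, (g i : ℚ) / (h i : ℚ) := by
  have hh : ∀ i, 0 < h i := fun i => (hgh i).1.trans (hgh i).2
  exact ⟨fun hW => hW.one_le_sum (fun _ hv => hv rfl) hh,
    HatGame.winnable_ne_of_one_le_sum (fun i => (hgh i).2.le) hh⟩
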